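/- Let α ∈ ℂ, 0 < ρ < r be real numbers, let Ψ : ℂ → ℂ be holomorphic on the exterior region E = {z ∈ ℂ : |z − α| > ρ}, and suppose Ψ(z)/(z − α) tends to a limit c ∈ ℂ as z → ∞ (along the cobounded filter on ℂ). Then for every z with |z − α| > r, Ψ(z) = c·(z − α) − ((z − α)/(2πi))·∮_{|ζ−α|=r} Ψ(ζ)/((ζ − α)(ζ − z)) dζ, where the circle |ζ − α| = r is traversed counterclockwise. -/

import Mathlib

/-! Put `g ζ = Ψ ζ / (ζ - α)`; the formula is equivalent to
`∮_{|ζ-α|=r} g ζ / (ζ - z) = 2πi (c - g z)`.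
Cauchy's formula on the annulus `r < |ζ - α| < R` shows that for every `R > |z - α|` the integral
over the circle of radius `R` exceeds the one over radius `r` by `2πi g z`. As `R → ∞` the former
tends to `2πi c`, because `g → c` at infinity and `∮_{|ζ-α|=R} (ζ - z)⁻¹ = 2πi`. -/

open Complex Filter Bornology Metric Set
open scoped Real Topology

theorem Metric.eventually_atTop_forall_sphere_of_cobounded {X : Type*} [PseudoMetricSpace X]
    {p : X → Prop} (h : ∀ᶠ x in cobounded X, p x) (c : X) :
    ∀ᶠ R in atTop, ∀ x ∈ sphere c R, p x := by
  rw [← comap_dist_right_atTop c, eventually_comap] at h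
  exact h.mono fun _ hR x hx => hR x hx

namespace circleIntegral

theorem integral_sub_inv_of_notMem_closedBall {c w : ℂ} {R : ℝ} (hR : 0 ≤ R)
    (hw : w ∉ closedBall c R) : (∮ z in C(c, R), (z - w)⁻¹) = 0 := by
  refine DiffContOnCl.circleIntegral_eq_zero hR (DifferentiableOn.diffContOnCl ?_)
  refine (differentiableOn_id.sub_const w).inv fun z hz => sub_ne_zero.2 ?_
  rintro rfl
  exact hw (closure_ball_subset_closedBall hz)

theorem integral_div_sub_eq_add {g : ℂ → ℂ} {c w : ℂ} {R : ℝ} (hR : 0 ≤ R)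
    (hg : ContinuousOn g (sphere c R)) (hw : w ∉ sphere c R) (a : ℂ) :
    (∮ z in C(c, R), g z / (z - w)) =
      (∮ z in C(c, R), (g z - a) / (z - w)) + a * ∮ z in C(c, R), (z - w)⁻¹ := by
  have hinv : ContinuousOn (fun z => (z - w)⁻¹) (sphere c R) :=
    (continuousOn_id.sub continuousOn_const).inv₀ fun z hz =>
      sub_ne_zero.2 (ne_of_mem_of_not_mem hz hw)
  have hga : CircleIntegrable (fun z => (g z - a) / (z - w)) c R :=
    ((hg.sub continuousOn_const).mul hinv).circleIntegrable hR
  have ha : CircleIntegrable (fun z => a * (z - w)⁻¹) c R :=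
    (continuousOn_const.mul hinv).circleIntegrable hR
  rw [← integral_const_mul, ← integral_add hga ha]
  exact integral_congr hR fun z _ => by ring

theorem integral_dslope_eq {g : ℂ → ℂ} {c w : ℂ} {R : ℝ} (hR : 0 ≤ R)
    (hg : ContinuousOn g (sphere c R)) (hw : w ∉ sphere c R) :
    (∮ z in C(c, R), dslope g w z) =
      (∮ z in C(c, R), g z / (z - w)) - g w * ∮ z in C(c, R), (z - w)⁻¹ := by
  rw [integral_div_sub_eq_add hR hg hw (g w), add_sub_cancel_right]
  refine integral_congr hR fun z hz => ?_
  rw [dslope_of_ne _ (ne_of_mem_of_not_mem hz hw), slope_def_field]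

theorem norm_integral_div_sub_le {g : ℂ → ℂ} {c w : ℂ} {R ε : ℝ} (hR : 0 < R)
    (hwR : 2 * dist w c ≤ R) (hg : ∀ z ∈ sphere c R, ‖g z‖ ≤ ε) :
    ‖∮ z in C(c, R), g z / (z - w)‖ ≤ 4 * π * ε := by
  have hbound : ∀ z ∈ sphere c R, ‖g z / (z - w)‖ ≤ 2 * ε / R := by
    intro z hz
    have hzw : R / 2 ≤ ‖z - w‖ := by
      have := dist_triangle z w c
      rw [mem_sphere.1 hz, dist_eq_norm] at this
      linarith
    have hε : 0 ≤ ε := (norm_nonneg _).trans (hg z hz)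
    calc ‖g z / (z - w)‖ = ‖g z‖ / ‖z - w‖ := norm_div _ _
      _ ≤ ε / (R / 2) := div_le_div₀ hε (hg z hz) (by positivity) hzw
      _ = 2 * ε / R := by ring
  calc ‖∮ z in C(c, R), g z / (z - w)‖ ≤ 2 * π * R * (2 * ε / R) :=
        norm_integral_le_of_norm_le_const hR.le hbound
    _ = 4 * π * ε := by field_simp; ring

end circleIntegral

open circleIntegral

theorem tendsto_circleIntegral_div_sub_atTop {g : ℂ → ℂ} {a : ℂ} (c w : ℂ)
    (hg : ∀ᶠ R in atTop, ContinuousOn g (sphere c R)) (hlim : Tendsto g (cobounded ℂ) (𝓝 a)) :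
    Tendsto (fun R => ∮ z in C(c, R), g z / (z - w)) atTop (𝓝 (2 * π * I * a)) := by
  have hsplit : ∀ᶠ R in atTop,
      (∮ z in C(c, R), (g z - a) / (z - w)) + 2 * π * I * a = ∮ z in C(c, R), g z / (z - w) := by
    filter_upwards [hg, eventually_gt_atTop (dist w c)] with R hgR hwR
    have hw : w ∈ ball c R := hwR
    rw [integral_div_sub_eq_add (dist_nonneg.trans hwR.le) hgR (fun h => hwR.ne (mem_sphere.1 h)),
      integral_sub_inv_of_mem_ball hw, mul_comm a]
  have hsmall : Tendsto (fun R => ∮ z in C(c, R), (g z - a) / (z - w)) atTop (𝓝 0) := by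
    refine NormedAddGroup.tendsto_nhds_zero.2 fun ε hε => ?_
    have hclose : ∀ᶠ x in cobounded ℂ, ‖g x - a‖ ≤ ε / (8 * π) :=
      (tendsto_iff_norm_sub_tendsto_zero.1 hlim).eventually (ge_mem_nhds (by positivity))
    filter_upwards [eventually_atTop_forall_sphere_of_cobounded hclose c,
      eventually_ge_atTop (2 * dist w c), eventually_gt_atTop 0] with R hgR hwR hR
    calc ‖∮ z in C(c, R), (g z - a) / (z - w)‖ ≤ 4 * π * (ε / (8 * π)) :=
          norm_integral_div_sub_le hR hwR hgR
      _ < ε := by field_simp; linarith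
  simpa using (hsmall.add_const (2 * π * I * a)).congr' hsplit

theorem circleIntegral_div_sub_sub_of_differentiableOn_annulus {g : ℂ → ℂ} {c w : ℂ} {r R : ℝ}
    (hr : 0 < r) (hg : DifferentiableOn ℂ g (closedBall c R \ ball c r))
    (hw : w ∈ ball c R \ closedBall c r) :
    (∮ z in C(c, R), g z / (z - w)) - (∮ z in C(c, r), g z / (z - w)) = 2 * π * I * g w := by
  have hrw : r < dist w c := not_le.1 hw.2
  have hwR : dist w c < R := hw.1
  have hopen : ball c R \ closedBall c r ⊆ interior (closedBall c R \ ball c r) :=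
    (isOpen_ball.sdiff isClosed_closedBall).subset_interior_iff.2
      (sdiff_subset_sdiff ball_subset_closedBall ball_subset_closedBall)
  have hdslope : DifferentiableOn ℂ (dslope g w) (closedBall c R \ ball c r) :=
    (differentiableOn_dslope (mem_interior_iff_mem_nhds.1 (hopen hw))).2 hg
  -- Goursat for the holomorphic difference quotient; `∮ (z - w)⁻¹` is `2πi` on the outer circle
  -- and `0` on the inner one.
  have hgoursat : (∮ z in C(c, R), dslope g w z) = ∮ z in C(c, r), dslope g w z :=
    circleIntegral_eq_of_differentiable_on_annulus_off_countable hr (hrw.trans hwR).le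
      countable_empty hdslope.continuousOn fun z hz =>
        hdslope.differentiableAt (mem_interior_iff_mem_nhds.1 (hopen hz.1))
  have hsphere : ∀ {s}, r ≤ s → s ≤ R → sphere c s ⊆ closedBall c R \ ball c r :=
    fun hrs hsR z hz => ⟨(mem_sphere.1 hz).trans_le hsR, (mem_sphere.1 hz).ge.trans' hrs |>.not_gt⟩
  have hRr : r ≤ R := (hrw.trans hwR).le
  rw [integral_dslope_eq (hr.le.trans hRr) (hg.continuousOn.mono (hsphere hRr le_rfl))
      (fun h => hwR.ne (mem_sphere.1 h)),
    integral_dslope_eq hr.le (hg.continuousOn.mono (hsphere le_rfl hRr))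
      (fun h => hrw.ne' (mem_sphere.1 h)),
    integral_sub_inv_of_mem_ball hwR, integral_sub_inv_of_notMem_closedBall hr.le hw.2] at hgoursat
  linear_combination hgoursat

theorem circleIntegral_div_sub_of_differentiableOn_compl_ball {g : ℂ → ℂ} {a c w : ℂ} {r : ℝ}
    (hr : 0 < r) (hg : DifferentiableOn ℂ g (ball c r)ᶜ) (hlim : Tendsto g (cobounded ℂ) (𝓝 a))
    (hw : r < dist w c) :
    (∮ z in C(c, r), g z / (z - w)) = 2 * π * I * (a - g w) := by
  have hannulus : ∀ᶠ R in atTop,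
      (∮ z in C(c, R), g z / (z - w)) = (∮ z in C(c, r), g z / (z - w)) + 2 * π * I * g w := by
    filter_upwards [eventually_gt_atTop (dist w c)] with R hwR
    rw [← circleIntegral_div_sub_sub_of_differentiableOn_annulus hr
      (hg.mono fun z hz => hz.2) ⟨hwR, hw.not_ge⟩, add_sub_cancel]
  have hcont : ∀ᶠ R in atTop, ContinuousOn g (sphere c R) := by
    filter_upwards [eventually_ge_atTop r] with R hrR
    exact hg.continuousOn.mono fun z hz => (mem_sphere.1 hz).ge.trans' hrR |>.not_gt
  have hconst := tendsto_nhds_unique ((tendsto_circleIntegral_div_sub_atTop c w hcont hlim).congr'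
    hannulus) tendsto_const_nhds
  linear_combination -hconst

theorem cauchy_formula_exterior_map
    (α : ℂ) (ρ r : ℝ) (hρ : 0 < ρ) (hr : ρ < r)
    (Ψ : ℂ → ℂ) (c : ℂ)
    (hΨ : DifferentiableOn ℂ Ψ {z : ℂ | ρ < ‖z - α‖})
    (hlim : Tendsto (fun z => Ψ z / (z - α)) (cobounded ℂ) (nhds c)) :
    ∀ z : ℂ, r < ‖z - α‖ →
      Ψ z = c * (z - α) -
        ((z - α) / (2 * ↑Real.pi * Complex.I)) *
          ∮ ζ in C(α, r), Ψ ζ / ((ζ - α) * (ζ - z)) := by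
  intro z hz
  have hr0 : 0 < r := hρ.trans hr
  have hexterior : (ball α r)ᶜ ⊆ {z : ℂ | ρ < ‖z - α‖} := fun w hw =>
    hr.trans_le (by simpa [dist_eq] using hw)
  have hg : DifferentiableOn ℂ (fun w => Ψ w / (w - α)) (ball α r)ᶜ :=
    (hΨ.mono hexterior).div (differentiableOn_id.sub_const α) fun w hw =>
      sub_ne_zero.2 (ne_of_mem_of_not_mem (mem_ball_self hr0) hw).symm
  have hcauchy := circleIntegral_div_sub_of_differentiableOn_compl_ball hr0 hg hlim
    (by rwa [dist_eq])
  simp only [div_div] at hcauchy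
  have hzα : z - α ≠ 0 := norm_pos_iff.1 (hr0.trans hz)
  rw [hcauchy]
  field_simp
  ring
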